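/- For every real x > 3/2, 2·h(x) ≤ (2x)^{log₃(√2+1)}. -/

import Mathlib

/-!
On `[3^n, 3^(n+1)]` the graph of `t ↦ 2 h (t / 2)` is the chord of the concave function
`t ↦ t ^ α`, `α = log₃(√2+1) ∈ (0,1)`, between its points of abscissa `3^n` and `3^(n+1)`,
because `(3^n) ^ α = (√2+1)^n`. A chord of a concave function lies below its graph.
-/

/-- The piecewise linear function connecting `(0,0)` and the points
`(3^n/2, (√2+1)^n/2)` for `n ≥ 1`. On `[3^n/2, 3^(n+1)/2]` it is given by the
affine formula below. -/
noncomputable def h (x : ℝ) : ℝ :=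
  if x ≤ 3 / 2 then (Real.sqrt 2 + 1) / 3 * x
  else
    let n : ℕ := (⌊Real.logb 3 (2 * x)⌋).toNat
    Real.sqrt 2 / 2 * ((Real.sqrt 2 + 1) / 3) ^ n * x
      + (Real.sqrt 2 + 1) ^ n * (2 - Real.sqrt 2) / 4

open Real

theorem ConcaveOn.secant_le {𝕜 : Type*} [Field 𝕜] [LinearOrder 𝕜] [IsStrictOrderedRing 𝕜]
    {s : Set 𝕜} {f : 𝕜 → 𝕜} (hf : ConcaveOn 𝕜 s f) {x y z : 𝕜} (hx : x ∈ s) (hz : z ∈ s)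
    (hxy : x ≤ y) (hyz : y ≤ z) (hxz : x < z) :
    ((z - y) * f x + (y - x) * f z) / (z - x) ≤ f y := by
  have hzx : 0 < z - x := sub_pos.mpr hxz
  have hcomb : (z - y) / (z - x) * x + (y - x) / (z - x) * z = y := by
    field_simp
    ring
  have key := hf.2 hx hz (div_nonneg (sub_nonneg.mpr hyz) hzx.le)
    (div_nonneg (sub_nonneg.mpr hxy) hzx.le) (by field_simp; ring)
  simp only [smul_eq_mul, hcomb] at key
  calc ((z - y) * f x + (y - x) * f z) / (z - x)
      = (z - y) / (z - x) * f x + (y - x) / (z - x) * f z := by ring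
    _ ≤ f y := key

theorem pow_toNat_floor_logb_le {b y : ℝ} (hb : 1 < b) (hy : 1 ≤ y) :
    b ^ ⌊logb b y⌋.toNat ≤ y := by
  have hfloor : 0 ≤ ⌊logb b y⌋ := Int.floor_nonneg.mpr (logb_nonneg hb hy)
  calc b ^ ⌊logb b y⌋.toNat = b ^ (⌊logb b y⌋ : ℝ) := by
        rw [← rpow_natCast, ← Int.cast_natCast, Int.toNat_of_nonneg hfloor]
    _ ≤ b ^ logb b y := rpow_le_rpow_of_exponent_le hb.le (Int.floor_le _)
    _ = y := rpow_logb (by linarith) hb.ne' (by linarith)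

theorem lt_pow_toNat_floor_logb_add_one {b y : ℝ} (hb : 1 < b) (hy : 0 < y) :
    y < b ^ (⌊logb b y⌋.toNat + 1) := by
  have hexp : logb b y < ((⌊logb b y⌋.toNat + 1 : ℕ) : ℝ) := by
    push_cast
    calc logb b y < ⌊logb b y⌋ + 1 := Int.lt_floor_add_one _
      _ ≤ ((⌊logb b y⌋.toNat : ℤ) : ℝ) + 1 := by gcongr; exact Int.self_le_toNat _
      _ = (⌊logb b y⌋.toNat : ℝ) + 1 := by norm_cast
  calc y = b ^ logb b y := (rpow_logb (by linarith) hb.ne' hy).symm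
    _ < b ^ ((⌊logb b y⌋.toNat + 1 : ℕ) : ℝ) := rpow_lt_rpow_of_exponent_lt hb hexp
    _ = b ^ (⌊logb b y⌋.toNat + 1) := rpow_natCast _ _

theorem pow_rpow_logb {b y : ℝ} (hb : 0 < b) (hb₁ : b ≠ 1) (hy : 0 < y) (m : ℕ) :
    (b ^ m) ^ logb b y = y ^ m := by
  rw [← rpow_pow_comm hb.le, rpow_logb hb hb₁ hy]

theorem two_mul_h_eq_secant {x : ℝ} (hx : 3 / 2 < x) {n : ℕ}
    (hn : ⌊logb 3 (2 * x)⌋.toNat = n) :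
    2 * h x = ((3 ^ (n + 1) - 2 * x) * (√2 + 1) ^ n + (2 * x - 3 ^ n) * (√2 + 1) ^ (n + 1))
      / (3 ^ (n + 1) - 3 ^ n) := by
  rw [h, if_neg (not_le.mpr hx)]
  simp only [hn]
  have hgap : (3 : ℝ) ^ (n + 1) - 3 ^ n ≠ 0 := by
    rw [pow_succ, ← mul_sub_one]; positivity
  rw [eq_div_iff hgap, div_pow]
  field_simp
  ring

theorem h_le_rpow :
    ∀ x : ℝ, 3 / 2 < x →
      2 * h x ≤ (2 * x) ^ Real.logb 3 (Real.sqrt 2 + 1) := by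
  intro x hx
  obtain ⟨n, hn⟩ : ∃ n, ⌊logb 3 (2 * x)⌋.toNat = n := ⟨_, rfl⟩
  have hlo : (3 : ℝ) ^ n ≤ 2 * x := hn ▸ pow_toNat_floor_logb_le (by norm_num) (by linarith)
  have hhi : 2 * x ≤ (3 : ℝ) ^ (n + 1) :=
    (hn ▸ lt_pow_toNat_floor_logb_add_one (by norm_num) (by linarith)).le
  have hsqrt : (1 : ℝ) ≤ √2 + 1 := by linarith [sqrt_nonneg 2]
  have hα₀ : 0 ≤ logb 3 (√2 + 1) := logb_nonneg (by norm_num) hsqrt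
  have hα₁ : logb 3 (√2 + 1) ≤ 1 := by
    rw [logb_le_iff_le_rpow (by norm_num) (by linarith), rpow_one]
    nlinarith [sq_sqrt (by norm_num : (0 : ℝ) ≤ 2), sqrt_nonneg 2]
  have hchord := (concaveOn_rpow hα₀ hα₁).secant_le (Set.mem_Ici.mpr (by positivity))
    (Set.mem_Ici.mpr (by positivity)) hlo hhi (pow_lt_pow_right₀ (by norm_num) n.lt_succ_self)
  rwa [pow_rpow_logb (by norm_num) (by norm_num) (by linarith),
    pow_rpow_logb (by norm_num) (by norm_num) (by linarith), ← two_mul_h_eq_secant hx hn] at hchord
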